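/- arXiv:2406.10987 — 4 statements merged into one kernel-verified Lean document; each statement's English description precedes it below -/
import Mathlib

section
/- For k ≥ 2 and n ≥ 1, the k-regular partition function satisfies the recurrence n · p_k(n) = ∑_{ℓ=1}^{n} g_k(ℓ) · p_k(n − ℓ), where g_k(ℓ) = σ(ℓ) − k·σ(ℓ/k) with σ(x) = 0 when x is not a positive integer, and p_k(0) = 1. -/
/-- The number of `k`-regular partitions of `n`: partitions of `n` with no part divisible
by `k`. -/
def regularPartitions (k n : ℕ) : ℕ :=
  (Finset.univ.filter fun p : n.Partition => ∀ i ∈ p.parts, ¬ k ∣ i).card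

/-- `g_k(ℓ) = σ(ℓ) - k·σ(ℓ/k)`, where `σ` is the sum-of-divisors function and the second
term is `0` unless `k ∣ ℓ`. -/
def gk (k l : ℕ) : ℤ :=
  (∑ d ∈ l.divisors, (d : ℤ)) - k * (if k ∣ l then ∑ d ∈ (l / k).divisors, (d : ℤ) else 0)

/-!
Double counting. For a partition `p` of `n` with all parts in `P`, write `m_d(p)` for the
multiplicity of the part `d`; then `n = ∑_d d · m_d(p) = ∑_d ∑_{j ≥ 1} d · [j ≤ m_d(p)]`.
Removing `j` copies of `d` identifies the partitions with `j ≤ m_d(p)` with the partitions of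
`n - d j` with parts in `P`, and grouping the pairs `(d, j)` by `l = d j` gives
`n p_P(n) = ∑_l (∑_{d ∣ l, P d} d) p_P(n - l)`. For `P = (¬ k ∣ ·)` the inner sum is
`σ(l) - k σ(l / k)`, because the divisors of `l` divisible by `k` are the `k e` with `e ∣ l / k`.
-/

open Finset

namespace Nat

variable {M : Type*} [AddCommMonoid M]

theorem sum_Icc_filter_dvd {d : ℕ} (hd : 0 < d) (n : ℕ) (f : ℕ → M) :
    ∑ l ∈ Icc 1 n with d ∣ l, f l = ∑ j ∈ Icc 1 (n / d), f (d * j) := by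
  have hmultiples : {l ∈ Icc 1 n | d ∣ l} = (Icc 1 (n / d)).image (d * ·) := by
    ext l
    simp only [mem_filter, mem_Icc, mem_image, Nat.le_div_iff_mul_le hd]
    constructor
    · rintro ⟨⟨hl, hln⟩, j, rfl⟩
      exact ⟨j, ⟨Nat.pos_of_mul_pos_left hl, by rwa [mul_comm]⟩, rfl⟩
    · rintro ⟨j, ⟨hj, hjn⟩, rfl⟩
      exact ⟨⟨Nat.mul_pos hd hj, by rwa [mul_comm]⟩, dvd_mul_right d j⟩
  rw [hmultiples, sum_image fun _ _ _ _ h => Nat.eq_of_mul_eq_mul_left hd h]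

theorem sum_Icc_sum_divisors_filter (P : ℕ → Prop) [DecidablePred P] (n : ℕ) (f : ℕ → ℕ → M) :
    ∑ l ∈ Icc 1 n, ∑ d ∈ l.divisors with P d, f d l =
      ∑ d ∈ Icc 1 n with P d, ∑ j ∈ Icc 1 (n / d), f d (d * j) := by
  rw [sum_comm' (t' := {d ∈ Icc 1 n | P d}) (s' := fun d => {l ∈ Icc 1 n | d ∣ l})]
  · refine sum_congr rfl fun d hd => sum_Icc_filter_dvd ?_ n (f d)
    simp only [mem_filter, mem_Icc] at hd
    omega
  · intro l d
    simp only [mem_filter, mem_Icc, Nat.mem_divisors]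
    constructor
    · rintro ⟨⟨hl, hln⟩, ⟨hdl, -⟩, hPd⟩
      have := Nat.le_of_dvd hl hdl
      exact ⟨⟨⟨hl, hln⟩, hdl⟩, ⟨Nat.pos_of_dvd_of_pos hdl hl, by omega⟩, hPd⟩
    · rintro ⟨⟨⟨hl, hln⟩, hdl⟩, -, hPd⟩
      exact ⟨⟨hl, hln⟩, ⟨hdl, by omega⟩, hPd⟩

theorem sum_divisors_filter_dvd (k l : ℕ) (f : ℕ → M) :
    ∑ d ∈ l.divisors with k ∣ d, f d = if k ∣ l then ∑ e ∈ (l / k).divisors, f (k * e) else 0 := by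
  split_ifs with hkl
  · obtain ⟨m, rfl⟩ := hkl
    rcases k.eq_zero_or_pos with rfl | hk
    · simp
    have hmultiples : {d ∈ (k * m).divisors | k ∣ d} = m.divisors.image (k * ·) := by
      ext d
      simp only [mem_filter, Nat.mem_divisors, mem_image, mul_ne_zero_iff]
      constructor
      · rintro ⟨⟨hdm, -, hm⟩, e, rfl⟩
        exact ⟨e, ⟨Nat.dvd_of_mul_dvd_mul_left hk hdm, hm⟩, rfl⟩
      · rintro ⟨e, ⟨hem, hm⟩, rfl⟩
        exact ⟨⟨mul_dvd_mul_left k hem, hk.ne', hm⟩, dvd_mul_right k e⟩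
    rw [Nat.mul_div_cancel_left m hk, hmultiples,
      sum_image fun _ _ _ _ h => Nat.eq_of_mul_eq_mul_left hk h]
  · refine sum_eq_zero fun d hd => absurd ?_ hkl
    simp only [mem_filter, Nat.mem_divisors] at hd
    exact hd.2.trans hd.1.1

end Nat

namespace Nat.Partition

section

variable {n : ℕ}

def partitionWithSubmultisetEquiv {s : Multiset ℕ} (hs : ∀ i ∈ s, 0 < i) (hsn : s.sum ≤ n) :
    {p : n.Partition // s ≤ p.parts} ≃ (n - s.sum).Partition where
  toFun p :=
    { parts := p.1.parts - s
      parts_pos := fun hi => p.1.parts_pos (Multiset.mem_of_le (Multiset.sub_le_self _ _) hi)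
      parts_sum := by
        have := congrArg Multiset.sum (tsub_add_cancel_of_le p.2)
        rw [Multiset.sum_add, p.1.parts_sum] at this
        omega }
  invFun q :=
    ⟨{ parts := q.parts + s
       parts_pos := by grind [q.parts_pos]
       parts_sum := by rw [Multiset.sum_add, q.parts_sum]; omega },
      Multiset.le_add_left _ _⟩
  left_inv p := Subtype.ext <| Partition.ext <| tsub_add_cancel_of_le p.2
  right_inv q := Partition.ext <| add_tsub_cancel_right _ _

@[simp]
theorem partitionWithSubmultisetEquiv_apply_parts {s : Multiset ℕ} (hs : ∀ i ∈ s, 0 < i)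
    (hsn : s.sum ≤ n) (p : {p : n.Partition // s ≤ p.parts}) :
    (partitionWithSubmultisetEquiv hs hsn p).parts = p.1.parts - s :=
  rfl

@[simp]
theorem partitionWithSubmultisetEquiv_symm_apply_parts {s : Multiset ℕ} (hs : ∀ i ∈ s, 0 < i)
    (hsn : s.sum ≤ n) (q : (n - s.sum).Partition) :
    ((partitionWithSubmultisetEquiv hs hsn).symm q).1.parts = q.parts + s :=
  rfl

theorem count_le_div (p : n.Partition) (d : ℕ) : p.parts.count d ≤ n / d := by
  rcases Nat.eq_zero_or_pos d with rfl | hd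
  · simpa using fun h => (p.parts_pos h).ne rfl
  obtain ⟨rest, hrest⟩ := Multiset.le_iff_exists_add.mp
    (Multiset.le_count_iff_replicate_le.mp (le_refl (p.parts.count d)))
  have := congrArg Multiset.sum hrest
  rw [p.parts_sum, Multiset.sum_add, Multiset.sum_replicate, smul_eq_mul] at this
  rw [Nat.le_div_iff_mul_le hd]
  omega

variable {P : ℕ → Prop} [DecidablePred P]

theorem card_restricted_filter_le_parts {s : Multiset ℕ} (hs : ∀ i ∈ s, 0 < i ∧ P i)
    (hsn : s.sum ≤ n) :
    #{p ∈ restricted n P | s ≤ p.parts} = #(restricted (n - s.sum) P) := by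
  have hs₀ : ∀ i ∈ s, 0 < i := fun i hi => (hs i hi).1
  refine card_bij' (fun p hp => partitionWithSubmultisetEquiv hs₀ hsn ⟨p, (mem_filter.1 hp).2⟩)
    (fun q _ => ((partitionWithSubmultisetEquiv hs₀ hsn).symm q).1) ?_ ?_ ?_ ?_
  · intro p hp
    simp only [restricted, mem_filter, mem_univ, true_and,
      partitionWithSubmultisetEquiv_apply_parts] at hp ⊢
    exact fun i hi => hp.1 i (Multiset.mem_of_le (Multiset.sub_le_self _ _) hi)
  · intro q hq
    simp only [restricted, mem_filter, mem_univ, true_and,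
      partitionWithSubmultisetEquiv_symm_apply_parts, Multiset.mem_add] at hq ⊢
    exact ⟨fun i hi => hi.elim (hq i) (fun h => (hs i h).2), Multiset.le_add_left _ _⟩
  · intro p _
    simp
  · intro q _
    simp

theorem card_restricted_filter_le_count {d j : ℕ} (hd : 0 < d) (hPd : P d) (hdj : d * j ≤ n) :
    #{p ∈ restricted n P | j ≤ p.parts.count d} = #(restricted (n - d * j) P) := by
  have := card_restricted_filter_le_parts (s := Multiset.replicate j d) (P := P)
      (by simp_all [Multiset.mem_replicate]) (by simpa [mul_comm] using hdj)
  rw [Multiset.sum_replicate, smul_eq_mul, mul_comm] at this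
  simpa only [Multiset.le_count_iff_replicate_le] using this

theorem sum_count_mul_eq_of_mem_restricted {p : n.Partition} (hp : p ∈ restricted n P) :
    ∑ d ∈ Icc 1 n with P d, p.parts.count d * d = n := by
  classical
  have hsub : p.parts.toFinset ⊆ {d ∈ Icc 1 n | P d} := by
    intro d hd
    rw [Multiset.mem_toFinset] at hd
    simp only [restricted, mem_filter, mem_univ, true_and] at hp
    simp [hp d hd, (p.parts_pos hd).ne', p.le_of_mem_parts hd, Nat.one_le_iff_ne_zero]
  simpa [smul_eq_mul, p.parts_sum] using (Finset.sum_multiset_count_of_subset p.parts _ hsub).symm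

theorem mul_card_restricted_eq_sum_sum :
    n * #(restricted n P) =
      ∑ d ∈ Icc 1 n with P d, ∑ j ∈ Icc 1 (n / d), d * #(restricted (n - d * j) P) := by
  have count_mul_eq_sum (p : n.Partition) (d : ℕ) :
      p.parts.count d * d = ∑ j ∈ Icc 1 (n / d), if j ≤ p.parts.count d then d else 0 := by
    have hfilter : {j ∈ Icc 1 (n / d) | j ≤ p.parts.count d} = Icc 1 (p.parts.count d) := by
      ext j
      have := p.count_le_div d
      simp only [mem_filter, mem_Icc]
      omega
    rw [← sum_filter, sum_const, smul_eq_mul, hfilter, Nat.card_Icc, add_tsub_cancel_right]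
  calc n * #(restricted n P)
      = ∑ p ∈ restricted n P, ∑ d ∈ Icc 1 n with P d, p.parts.count d * d := by
        rw [mul_comm, ← smul_eq_mul, ← sum_const,
          sum_congr rfl fun p hp => sum_count_mul_eq_of_mem_restricted hp]
    _ = ∑ d ∈ Icc 1 n with P d, ∑ j ∈ Icc 1 (n / d),
          ∑ p ∈ restricted n P, if j ≤ p.parts.count d then d else 0 := by
        simp_rw [count_mul_eq_sum]
        rw [sum_comm]
        exact sum_congr rfl fun d _ => sum_comm
    _ = _ := by
        refine sum_congr rfl fun d hd => sum_congr rfl fun j hj => ?_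
        simp only [mem_filter, mem_Icc] at hd hj
        have hdj : d * j ≤ n := by
          rw [mul_comm]
          exact (Nat.le_div_iff_mul_le (by omega)).mp hj.2
        rw [← sum_filter, sum_const, smul_eq_mul, mul_comm,
          card_restricted_filter_le_count (by omega) hd.2 hdj]

end

theorem mul_card_restricted_eq_sum (P : ℕ → Prop) [DecidablePred P] (n : ℕ) :
    n * #(restricted n P) =
      ∑ l ∈ Icc 1 n, (∑ d ∈ l.divisors with P d, d) * #(restricted (n - l) P) := by
  simp_rw [sum_mul]
  rw [mul_card_restricted_eq_sum_sum, Nat.sum_Icc_sum_divisors_filter P n]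

end Nat.Partition

theorem regularPartitions_eq_card_restricted (k n : ℕ) :
    regularPartitions k n = #(Nat.Partition.restricted n (¬ k ∣ ·)) :=
  rfl

theorem gk_eq_sum_divisors_filter_not_dvd (k l : ℕ) :
    gk k l = ∑ d ∈ l.divisors with ¬ k ∣ d, (d : ℤ) := by
  rw [gk, ← sum_filter_add_sum_filter_not l.divisors (k ∣ ·), Nat.sum_divisors_filter_dvd]
  split_ifs <;> simp [mul_sum]

theorem regular_recurrence_general (k : ℕ) (n : ℕ) :
    (n : ℤ) * regularPartitions k n =
      ∑ l ∈ Finset.Icc 1 n, gk k l * regularPartitions k (n - l) := by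
  simp only [gk_eq_sum_divisors_filter_not_dvd, regularPartitions_eq_card_restricted]
  have := congrArg (Nat.cast : ℕ → ℤ) (Nat.Partition.mul_card_restricted_eq_sum (¬ k ∣ ·) n)
  push_cast at this
  exact this

/-- The recurrence `n · p_k(n) = ∑_{ℓ=1}^n g_k(ℓ) p_k(n - ℓ)`. -/
theorem regular_recurrence (k : ℕ) (hk : 2 ≤ k) (n : ℕ) (hn : 1 ≤ n) :
    (n : ℤ) * regularPartitions k n =
      ∑ l ∈ Finset.Icc 1 n, gk k l * regularPartitions k (n - l) :=
  regular_recurrence_general k n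
end

section
/- For every k ≥ 2 and every n ≥ 0, p_k(n) > 2^{√(2n/3 + 1/4) − 3/2}. -/
namespace Nat.Partition

def padWithOnes (n : ℕ) (s : Multiset ℕ) (hpos : ∀ i ∈ s, 0 < i) (hsum : s.sum ≤ n) :
    n.Partition where
  parts := s + Multiset.replicate (n - s.sum) 1
  parts_pos {i} hi := by
    rcases Multiset.mem_add.1 hi with hi | hi
    · exact hpos i hi
    · rw [Multiset.eq_of_mem_replicate hi]; exact one_pos
  parts_sum := by
    rw [Multiset.sum_add, Multiset.sum_replicate, smul_eq_mul, mul_one]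
    omega

theorem filter_two_le_parts_padWithOnes {n : ℕ} {s : Multiset ℕ} (hpos : ∀ i ∈ s, 0 < i)
    (hsum : s.sum ≤ n) (h2 : ∀ i ∈ s, 2 ≤ i) :
    (padWithOnes n s hpos hsum).parts.filter (2 ≤ ·) = s := by
  rw [padWithOnes, Multiset.filter_add, Multiset.filter_eq_self.2 h2,
    Multiset.filter_eq_nil.2 fun i hi => by rw [Multiset.eq_of_mem_replicate hi]; omega,
    add_zero]

end Nat.Partition

open Nat.Partition in
theorem two_pow_card_le_regularPartitions {k n : ℕ} (hk : k ≠ 1) {B : Finset ℕ}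
    (hB : ∀ b ∈ B, 2 ≤ b ∧ ¬ k ∣ b) (hsum : ∑ b ∈ B, b ≤ n) :
    2 ^ B.card ≤ regularPartitions k n := by
  classical
  rw [← Finset.card_powerset]
  refine Finset.card_le_card_of_surjOn (fun p => (p.parts.filter (2 ≤ ·)).toFinset) ?_
  intro S hS
  rw [Finset.mem_coe, Finset.mem_powerset] at hS
  have h2 : ∀ i ∈ S.val, 2 ≤ i := fun i hi => (hB i (hS hi)).1
  have hpos : ∀ i ∈ S.val, 0 < i := fun i hi => by have := h2 i hi; omega
  have hSsum : S.val.sum ≤ n := by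
    simpa using (Finset.sum_le_sum_of_subset (f := id) hS).trans hsum
  refine ⟨padWithOnes n S.val hpos hSsum, ?_, ?_⟩
  · simp only [Finset.coe_filter, Finset.mem_univ, true_and, Set.mem_ofPred_eq]
    intro i hi
    rcases Multiset.mem_add.1 hi with hi | hi
    · exact (hB i (hS hi)).2
    · rwa [Multiset.eq_of_mem_replicate hi, Nat.dvd_one]
  · simp only [filter_two_le_parts_padWithOnes hpos hSsum h2, Finset.val_toFinset]

def regularPart (k j : ℕ) : ℕ :=
  if k ∣ 2 * j + 2 then 2 * j + 3 else 2 * j + 2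

theorem two_mul_add_two_le_regularPart (k j : ℕ) : 2 * j + 2 ≤ regularPart k j := by
  unfold regularPart; split <;> omega

theorem regularPart_le_two_mul_add_three (k j : ℕ) : regularPart k j ≤ 2 * j + 3 := by
  unfold regularPart; split <;> omega

theorem not_dvd_regularPart {k : ℕ} (hk : k ≠ 1) (j : ℕ) : ¬ k ∣ regularPart k j := by
  unfold regularPart
  split_ifs with h
  · exact fun h' => hk (Nat.dvd_one.mp ((Nat.dvd_add_right h).mp h'))
  · exact h

theorem strictMono_regularPart (k : ℕ) : StrictMono (regularPart k) :=
  strictMono_nat_of_lt_succ fun j =>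
    (regularPart_le_two_mul_add_three k j).trans_lt (two_mul_add_two_le_regularPart k (j + 1))

theorem sum_range_regularPart_le (k t : ℕ) :
    ∑ j ∈ Finset.range t, regularPart k j ≤ t * (t + 2) := by
  induction t with
  | zero => simp
  | succ t ih =>
    rw [Finset.sum_range_succ]
    have := regularPart_le_two_mul_add_three k t
    nlinarith

theorem two_pow_le_regularPartitions {k n t : ℕ} (hk : k ≠ 1) (ht : (t + 1) ^ 2 ≤ n + 1) :
    2 ^ t ≤ regularPartitions k n := by
  have hinj := (strictMono_regularPart k).injective
  have hsum : ∑ b ∈ (Finset.range t).image (regularPart k), b ≤ n := by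
    rw [Finset.sum_image fun _ _ _ _ h => hinj h]
    nlinarith [sum_range_regularPart_le k t]
  have hB := two_pow_card_le_regularPartitions hk (fun b hb => by
      obtain ⟨j, -, rfl⟩ := Finset.mem_image.1 hb
      exact ⟨(two_mul_add_two_le_regularPart k j).trans' (by omega), not_dvd_regularPart hk j⟩)
    hsum
  rwa [Finset.card_image_of_injective _ hinj, Finset.card_range] at hB

theorem sqrt_two_mul_div_three_add_quarter_sub_three_halves_lt {n t : ℕ}
    (h : n + 1 < (t + 2) ^ 2) : √(2 * n / 3 + 1 / 4) - 3 / 2 < t := by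
  have hR : (n : ℝ) + 2 ≤ (t + 2) ^ 2 := by exact_mod_cast h
  rw [sub_lt_iff_lt_add, Real.sqrt_lt' (by positivity)]
  nlinarith [sq_nonneg ((t : ℝ) + 1 / 2)]

/-- For every `k ≥ 2` and `n ≥ 0`, `p_k(n) > 2^{√(2n/3 + 1/4) - 3/2}`. -/
theorem regular_lower_bound (k n : ℕ) (hk : 2 ≤ k) :
    (regularPartitions k n : ℝ) >
      (2 : ℝ) ^ (Real.sqrt (2 * n / 3 + 1 / 4) - 3 / 2) := by
  obtain ⟨t, ht⟩ : ∃ t, Nat.sqrt (n + 1) = t + 1 :=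
    Nat.exists_eq_add_one.2 (Nat.sqrt_pos.2 n.succ_pos)
  have hle : (t + 1) ^ 2 ≤ n + 1 := ht ▸ Nat.sqrt_le' (n + 1)
  have hlt : n + 1 < (t + 2) ^ 2 := by simpa [ht] using Nat.lt_succ_sqrt' (n + 1)
  calc (2 : ℝ) ^ (Real.sqrt (2 * n / 3 + 1 / 4) - 3 / 2)
      < 2 ^ (t : ℝ) := Real.rpow_lt_rpow_of_exponent_lt one_lt_two
        (sqrt_two_mul_div_three_add_quarter_sub_three_halves_lt hlt)
    _ = ((2 ^ t : ℕ) : ℝ) := by rw [Real.rpow_natCast]; push_cast; rfl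
    _ ≤ regularPartitions k n := by exact_mod_cast two_pow_le_regularPartitions (by omega) hle
end

section
/- For the partition function p, the inequality p(a)·p(b) > p(a+b) holds for all integers 1 < a ≤ b except that equality p(a)p(b) = p(a+b) holds exactly for (a,b) ∈ {(2,6), (2,7), (3,4)} and the reverse inequality p(a)p(b) < p(a+b) holds exactly for (a,b) ∈ {(2,2), (2,3), (2,4), (2,5), (3,3), (3,5)}. -/
/-!
Write `p_k(n)` for the number of partitions of `n` into parts `≥ k`, so that `p_1 = p`. Removing
one part equal to `k` gives `p_k(n) = p_k(n - k) + p_{k+1}(n)`, in particular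
`p(n) = p(n - 1) + p_2(n)`.

Along this recursion, `p_k(a + n) ≤ p(a) p_k(n)` for `2 ≤ a` and `2 ≤ k ≤ n`, up to two small
exceptions. In the base case `k ≤ n < 2k` we have `p_k(n) = 1`, and subtracting `k - 1` from every
part compares the partitions of `a + n` into `r` parts `≥ k` with the partitions of `a` into `r`
parts, one `r` at a time.

For `k = 2` this says that `p(a) p(b) - p(a + b)` does not decrease when `b` grows by one. It is
positive at `(2, 8)`, `(3, 6)` and `(4, 4)`, hence whenever `2 ≤ a ≤ b` and `2a + b ≥ 12`; the nine
pairs with `2a + b < 12` are evaluated directly.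
-/

/-- The unrestricted partition function. -/
def partitionFunction (n : ℕ) : ℕ := Fintype.card n.Partition

open Finset

lemma Multiset.sup_mem_of_ne_zero {α : Type*} [LinearOrder α] [OrderBot α] {s : Multiset α}
    (hs : s ≠ 0) : s.sup ∈ s := by
  induction s using Multiset.induction_on with
  | empty => exact absurd rfl hs
  | cons a s ih =>
    rcases eq_or_ne s 0 with rfl | hs'
    · simp
    · rw [Multiset.sup_cons]
      rcases max_choice a s.sup with h | h <;> simp [h, ih hs']

lemma Multiset.sum_map_add_const {α : Type*} [AddCommMonoid α] (s : Multiset α) (j : α) :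
    (s.map (· + j)).sum = s.sum + s.card • j := by
  simp [Multiset.sum_map_add]

lemma Multiset.map_sub_add_cancel {α : Type*} [AddCommMonoid α] [PartialOrder α]
    [CanonicallyOrderedAdd α] [Sub α] [OrderedSub α] {s : Multiset α} {j : α}
    (h : ∀ a ∈ s, j ≤ a) : (s.map (· - j)).map (· + j) = s := by
  rw [Multiset.map_map]
  exact (Multiset.map_congr rfl fun a ha ↦ tsub_add_cancel_of_le (h a ha)).trans (Multiset.map_id _)

lemma Finset.sum_le_sum_of_le_off_pair {ι M : Type*} [AddCommMonoid M] [PartialOrder M]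
    [IsOrderedAddMonoid M] [DecidableEq ι] {s : Finset ι} {f g : ι → M} {i j : ι} (hij : i ≠ j)
    (hi : i ∈ s) (hj : j ∈ s) (hfg : ∀ r ∈ s, r ≠ i → r ≠ j → f r ≤ g r)
    (hpair : f i + f j ≤ g i + g j) : ∑ r ∈ s, f r ≤ ∑ r ∈ s, g r := by
  have hsub : {i, j} ⊆ s := insert_subset hi (singleton_subset_iff.2 hj)
  rw [← sum_sdiff hsub, ← sum_sdiff hsub (f := g), sum_pair hij, sum_pair hij]
  refine add_le_add (sum_le_sum fun r hr ↦ ?_) hpair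
  simp only [mem_sdiff, mem_insert, mem_singleton, not_or] at hr
  exact hfg r hr.1 hr.2.1 hr.2.2

namespace Nat.Partition

variable {n k : ℕ}

lemma parts_ne_zero (P : n.Partition) (hn : n ≠ 0) : P.parts ≠ 0 := by
  rintro h
  exact hn (by simpa [h] using P.parts_sum.symm)

lemma card_parts_pos (P : n.Partition) (hn : n ≠ 0) : 0 < P.parts.card :=
  Multiset.card_pos.2 (P.parts_ne_zero hn)

lemma card_parts_mul_le (P : n.Partition) (h : ∀ i ∈ P.parts, k ≤ i) :
    P.parts.card * k ≤ n := by
  simpa [P.parts_sum] using Multiset.card_nsmul_le_sum h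

lemma card_parts_le (P : n.Partition) : P.parts.card ≤ n := by
  simpa using P.card_parts_mul_le (k := 1) fun _ hi ↦ P.parts_pos hi

def addToLargestPart (P : n.Partition) (hn : n ≠ 0) (d : ℕ) : (n + d).Partition where
  parts := (P.parts.sup + d) ::ₘ P.parts.erase P.parts.sup
  parts_pos {i} hi := by
    rcases Multiset.mem_cons.1 hi with rfl | hi
    · exact Nat.add_pos_left (P.parts_pos (Multiset.sup_mem_of_ne_zero (P.parts_ne_zero hn))) d
    · exact P.parts_pos (Multiset.mem_of_mem_erase hi)
  parts_sum := by
    have := Multiset.sum_erase (Multiset.sup_mem_of_ne_zero (P.parts_ne_zero hn))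
    rw [P.parts_sum] at this
    rw [Multiset.sum_cons]
    omega

lemma sup_parts_addToLargestPart (P : n.Partition) (hn : n ≠ 0) (d : ℕ) :
    (P.addToLargestPart hn d).parts.sup = P.parts.sup + d := by
  rw [addToLargestPart, Multiset.sup_cons, sup_eq_left, Multiset.sup_le]
  exact fun i hi ↦ (Multiset.le_sup (Multiset.mem_of_mem_erase hi)).trans (Nat.le_add_right _ _)

lemma card_parts_addToLargestPart (P : n.Partition) (hn : n ≠ 0) (d : ℕ) :
    (P.addToLargestPart hn d).parts.card = P.parts.card := by
  rw [addToLargestPart, Multiset.card_cons,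
    Multiset.card_erase_add_one (Multiset.sup_mem_of_ne_zero (P.parts_ne_zero hn))]

lemma addToLargestPart_injective (hn : n ≠ 0) (d : ℕ) :
    Function.Injective (addToLargestPart · hn d) := by
  intro P Q h
  have hsup : P.parts.sup = Q.parts.sup := by
    simpa [sup_parts_addToLargestPart] using congrArg (·.parts.sup) h
  have hparts := congrArg Nat.Partition.parts h
  simp only [addToLargestPart, hsup, Multiset.cons_inj_right] at hparts
  ext1
  rw [← Multiset.cons_erase (Multiset.sup_mem_of_ne_zero (P.parts_ne_zero hn)),
    ← Multiset.cons_erase (Multiset.sup_mem_of_ne_zero (Q.parts_ne_zero hn)), hsup, hparts]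

end Nat.Partition

open Nat.Partition

def partitionFunctionGE (k n : ℕ) : ℕ := #(restricted n (k ≤ ·))

section partitionFunctionGE

variable {k n : ℕ}

lemma partitionFunctionGE_one (n : ℕ) : partitionFunctionGE 1 n = partitionFunction n := by
  rw [partitionFunctionGE, restricted,
    filter_true_of_mem fun P _ _ ↦ P.parts_pos]
  rfl

lemma partitionFunctionGE_zero_right (k : ℕ) : partitionFunctionGE k 0 = 1 := by
  rw [partitionFunctionGE, restricted, filter_true_of_mem (by simp)]
  rfl

lemma partitionFunctionGE_eq_zero (hn : n ≠ 0) (hnk : n < k) : partitionFunctionGE k n = 0 := by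
  rw [partitionFunctionGE, card_eq_zero, restricted, filter_eq_empty_iff]
  intro P _ hP
  have := P.card_parts_mul_le hP
  have := Nat.le_mul_of_pos_left k (P.card_parts_pos hn)
  omega

lemma partitionFunctionGE_eq_one (hkn : k ≤ n) (hn : n < 2 * k) : partitionFunctionGE k n = 1 := by
  rw [partitionFunctionGE, card_eq_one]
  refine ⟨indiscrete n, ?_⟩
  ext P
  simp only [restricted, mem_filter, mem_univ, true_and, mem_singleton]
  constructor
  · intro hP
    have hcard : P.parts.card = 1 := by
      have := P.card_parts_mul_le hP
      have := P.card_parts_pos (by omega)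
      by_contra
      have := Nat.mul_le_mul_right k (show 2 ≤ P.parts.card by omega)
      omega
    obtain ⟨m, hm⟩ := Multiset.card_eq_one.1 hcard
    have : m = n := by simpa [hm] using P.parts_sum
    ext1
    rw [hm, indiscrete_parts (by omega), this]
  · rintro rfl i hi
    rw [indiscrete_parts (by omega), Multiset.mem_singleton] at hi
    omega

lemma partitionFunctionGE_rec (hk : 1 ≤ k) (hkn : k ≤ n) :
    partitionFunctionGE k n = partitionFunctionGE k (n - k) + partitionFunctionGE (k + 1) n := by
  rw [partitionFunctionGE, ← card_filter_add_card_filter_not (k ∈ ·.parts)]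
  congr 1
  · refine card_bij' (fun P hP ↦ partitionWithPartEquiv hk hkn ⟨P, (mem_filter.1 hP).2⟩)
      (fun Q _ ↦ ((partitionWithPartEquiv hk hkn).symm Q).1) ?_ ?_ ?_ ?_
    · simp only [restricted, mem_filter, mem_univ, true_and]
      exact fun P hP i hi ↦ hP.1 i (Multiset.mem_of_mem_erase hi)
    · simp +contextual [restricted]
    · simp
    · simp
  · rw [partitionFunctionGE, restricted, restricted, filter_filter]
    congr 1
    refine filter_congr fun P _ ↦ ⟨fun ⟨hP, hk⟩ i hi ↦ ?_, fun hP ↦ ⟨fun i hi ↦ ?_, fun hk ↦ ?_⟩⟩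
    · exact lt_of_le_of_ne (hP i hi) (by rintro rfl; exact hk hi)
    · exact Nat.le_of_succ_le (hP i hi)
    · exact Nat.lt_irrefl k (hP k hk)

lemma partitionFunction_eq_add_partitionFunctionGE_two {n : ℕ} (hn : 1 ≤ n) :
    partitionFunction n = partitionFunction (n - 1) + partitionFunctionGE 2 n := by
  rw [← partitionFunctionGE_one, ← partitionFunctionGE_one, partitionFunctionGE_rec le_rfl hn]

end partitionFunctionGE

-- Structural recursion on `fuel`, so that the kernel can evaluate it by `decide`.
def partitionFunctionGEEval : ℕ → ℕ → ℕ → ℕ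
  | 0, _, _ => 0
  | fuel + 1, k, n =>
    if n = 0 then 1
    else if n < k then 0
    else partitionFunctionGEEval fuel k (n - k) + partitionFunctionGEEval fuel (k + 1) n

lemma partitionFunctionGEEval_eq {fuel k n : ℕ} (hk : 1 ≤ k) (hfuel : n + (n + 1 - k) < fuel) :
    partitionFunctionGEEval fuel k n = partitionFunctionGE k n := by
  induction fuel generalizing k n with
  | zero => omega
  | succ fuel ih =>
    rw [partitionFunctionGEEval]
    split_ifs with hn hnk
    · rw [hn, partitionFunctionGE_zero_right]
    · rw [partitionFunctionGE_eq_zero hn hnk]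
    · rw [ih hk (by omega), ih (by omega) (by omega)]
      exact (partitionFunctionGE_rec hk (by omega)).symm

lemma partitionFunctionGE_eq_eval {k : ℕ} (hk : 1 ≤ k) (n : ℕ) :
    partitionFunctionGE k n = partitionFunctionGEEval (2 * n + 1) k n :=
  (partitionFunctionGEEval_eq hk (by omega)).symm

lemma partitionFunction_eq_eval (n : ℕ) :
    partitionFunction n = partitionFunctionGEEval (2 * n + 1) 1 n := by
  rw [← partitionFunctionGE_one, partitionFunctionGE_eq_eval le_rfl]

def partitionFunctionNumParts (r n : ℕ) : ℕ := #{P : n.Partition | P.parts.card = r}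

section partitionFunctionNumParts

variable {r n : ℕ}

lemma partitionFunctionNumParts_zero_left (hn : n ≠ 0) : partitionFunctionNumParts 0 n = 0 := by
  rw [partitionFunctionNumParts, card_eq_zero, filter_eq_empty_iff]
  exact fun P _ h ↦ P.parts_ne_zero hn (Multiset.card_eq_zero.1 h)

lemma partitionFunctionNumParts_one_left (hn : n ≠ 0) : partitionFunctionNumParts 1 n = 1 := by
  rw [partitionFunctionNumParts, card_eq_one]
  refine ⟨indiscrete n, ?_⟩
  ext P
  simp only [mem_filter, mem_univ, true_and, mem_singleton]
  constructor
  · intro h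
    obtain ⟨m, hm⟩ := Multiset.card_eq_one.1 h
    have : m = n := by simpa [hm] using P.parts_sum
    ext1
    rw [hm, indiscrete_parts hn, this]
  · rintro rfl
    simp [indiscrete_parts hn]

lemma partitionFunctionNumParts_eq_zero_of_lt (h : n < r) : partitionFunctionNumParts r n = 0 := by
  rw [partitionFunctionNumParts, card_eq_zero, filter_eq_empty_iff]
  intro P _ hP
  have := P.card_parts_le
  omega

lemma partitionFunctionNumParts_self_pos (n : ℕ) : 0 < partitionFunctionNumParts n n := by
  refine card_pos.2 ⟨⟨Multiset.replicate n 1, fun hi ↦ ?_, by simp⟩, by simp⟩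
  rw [Multiset.eq_of_mem_replicate hi]
  exact Nat.one_pos

lemma partitionFunctionNumParts_mono (hr : r ≠ 0) : Monotone (partitionFunctionNumParts r) := by
  intro x y hxy
  rcases eq_or_ne x 0 with rfl | hx
  · rw [partitionFunctionNumParts_eq_zero_of_lt (Nat.pos_of_ne_zero hr)]
    exact Nat.zero_le _
  obtain ⟨d, rfl⟩ := Nat.exists_eq_add_of_le hxy
  refine card_le_card_of_injOn (·.addToLargestPart hx d) (fun P hP ↦ ?_)
    (addToLargestPart_injective hx d).injOn
  simpa [card_parts_addToLargestPart] using hP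

lemma partitionFunctionNumParts_two_left (n : ℕ) : partitionFunctionNumParts 2 n = n / 2 := by
  rw [partitionFunctionNumParts, ← Nat.add_sub_cancel (n := n / 2) (m := 1), ← Nat.card_Icc]
  symm
  refine card_bij (fun u hu ↦ ⟨{u, n - u}, fun {i} hi ↦ ?_, ?_⟩) ?_ ?_ ?_
  · simp only [mem_Icc] at hu
    simp only [Multiset.insert_eq_cons, Multiset.mem_cons, Multiset.mem_singleton] at hi
    omega
  · simp only [mem_Icc] at hu
    simp only [Multiset.insert_eq_cons, Multiset.sum_cons, Multiset.sum_singleton]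
    omega
  · simp
  · intro u hu v hv h
    simp only [mem_Icc] at hu hv
    have hparts : ({u, n - u} : Multiset ℕ) = {v, n - v} := congrArg Nat.Partition.parts h
    have hu' : u ∈ ({v, n - v} : Multiset ℕ) := by simp [← hparts]
    simp only [Multiset.insert_eq_cons, Multiset.mem_cons, Multiset.mem_singleton] at hu'
    omega
  · intro P hP
    simp only [mem_filter, mem_univ, true_and] at hP
    obtain ⟨x, y, hxy⟩ := Multiset.card_eq_two.1 hP
    have hsum : x + y = n := by simpa [hxy] using P.parts_sum
    have hx : 0 < x := P.parts_pos (by simp [hxy])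
    have hy : 0 < y := P.parts_pos (by simp [hxy])
    rcases le_total x y with h | h
    · refine ⟨x, by simp only [mem_Icc]; omega, ?_⟩
      ext1
      simp only [hxy, show n - x = y by omega]
    · refine ⟨y, by simp only [mem_Icc]; omega, ?_⟩
      ext1
      simp only [hxy, show n - y = x by omega, Multiset.pair_comm]

end partitionFunctionNumParts

lemma card_restricted_filter_card_parts {k : ℕ} (hk : 1 ≤ k) (r m : ℕ) :
    #{P ∈ restricted m (k ≤ ·) | P.parts.card = r} =
      partitionFunctionNumParts r (m - r * (k - 1)) := by
  obtain ⟨j, rfl⟩ : ∃ j, k = j + 1 := ⟨k - 1, by omega⟩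
  rw [Nat.add_sub_cancel]
  by_cases hm : r * j ≤ m
  · obtain ⟨x, rfl⟩ := Nat.exists_eq_add_of_le' hm
    rw [Nat.add_sub_cancel, partitionFunctionNumParts]
    symm
    refine card_bij' (fun Q hQ ↦ ⟨Q.parts.map (· + j), fun {i} hi ↦ ?_, ?_⟩)
      (fun P hP ↦ ⟨P.parts.map (· - j), fun {i} hi ↦ ?_, ?_⟩) ?_ ?_ ?_ ?_
    · obtain ⟨a, ha, rfl⟩ := Multiset.mem_map.1 hi
      have := Q.parts_pos ha
      omega
    · rw [Multiset.sum_map_add_const, Q.parts_sum, (mem_filter.1 hQ).2, smul_eq_mul]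
    · simp only [restricted, mem_filter, mem_univ, true_and] at hP
      obtain ⟨a, ha, rfl⟩ := Multiset.mem_map.1 hi
      have := hP.1 a ha
      omega
    · simp only [restricted, mem_filter, mem_univ, true_and] at hP
      have := Multiset.sum_map_add_const (P.parts.map (· - j)) j
      rw [Multiset.map_sub_add_cancel fun a ha ↦ Nat.le_of_succ_le (hP.1 a ha), P.parts_sum,
        Multiset.card_map, hP.2, smul_eq_mul] at this
      omega
    · intro Q hQ
      simp only [restricted, mem_filter, mem_univ, true_and] at hQ ⊢
      refine ⟨fun i hi ↦ ?_, by rw [Multiset.card_map, hQ]⟩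
      obtain ⟨a, ha, rfl⟩ := Multiset.mem_map.1 hi
      have := Q.parts_pos ha
      omega
    · intro P hP
      simp only [restricted, mem_filter, mem_univ, true_and] at hP ⊢
      rw [Multiset.card_map, hP.2]
    · intro Q _
      ext1
      simp [Multiset.map_map]
    · intro P hP
      simp only [restricted, mem_filter, mem_univ, true_and] at hP
      ext1
      exact Multiset.map_sub_add_cancel fun a ha ↦ Nat.le_of_succ_le (hP.1 a ha)
  · rw [Nat.sub_eq_zero_of_le (by omega),
      partitionFunctionNumParts_eq_zero_of_lt (Nat.pos_of_ne_zero (by rintro rfl; omega)),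
      card_eq_zero, filter_eq_empty_iff]
    intro P hP hr
    have := P.card_parts_mul_le (mem_filter.1 hP).2
    rw [hr] at this
    nlinarith

lemma partitionFunctionGE_eq_sum {k m N : ℕ} (hk : 1 ≤ k) (hN : m < N) :
    partitionFunctionGE k m = ∑ r ∈ range N, partitionFunctionNumParts r (m - r * (k - 1)) := by
  rw [partitionFunctionGE, card_eq_sum_card_fiberwise (f := fun P ↦ P.parts.card) (t := range N)
    fun P _ ↦ mem_range.2 (P.card_parts_le.trans_lt hN)]
  exact sum_congr rfl fun r _ ↦ card_restricted_filter_card_parts hk r m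

lemma partitionFunctionNumParts_add_sub_mul_le {k a n r : ℕ} (hk : 2 ≤ k) (ha : 1 ≤ a)
    (hkn : k ≤ n) (hn : n < 2 * k) (hr : r ≠ 2) :
    partitionFunctionNumParts r (a + n - r * (k - 1)) ≤ partitionFunctionNumParts r a := by
  rcases Nat.lt_or_ge r 3 with hr3 | hr3
  · obtain rfl | rfl : r = 0 ∨ r = 1 := by omega
    · simp [partitionFunctionNumParts_zero_left (show a + n ≠ 0 by omega)]
    · rw [partitionFunctionNumParts_one_left (by omega),
        partitionFunctionNumParts_one_left (by omega)]
  · refine partitionFunctionNumParts_mono (by omega) ?_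
    have := Nat.mul_le_mul_right (k - 1) hr3
    omega

theorem partitionFunctionGE_add_le_of_lt_two_mul {k a n : ℕ} (hk : 2 ≤ k) (ha : 2 ≤ a)
    (hkn : k ≤ n) (hn : n < 2 * k) (hexc : ¬(k = 2 ∧ a = 3 ∧ n = 3)) :
    partitionFunctionGE k (a + n) ≤ partitionFunction a := by
  rw [← partitionFunctionGE_one, partitionFunctionGE_eq_sum (N := a + n + 1) (by omega) (by omega),
    partitionFunctionGE_eq_sum (N := a + n + 1) le_rfl (by omega)]
  simp only [Nat.sub_self, mul_zero, Nat.sub_zero]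
  by_cases hodd : n = 2 * k - 1 ∧ a % 2 = 1
  · -- The `r = 2` term exceeds its counterpart by one; the `r = a` term makes up for it,
    -- since no partition of `a + n` has `a` parts `≥ k`.
    have hfa : partitionFunctionNumParts a (a + n - a * (k - 1)) = 0 := by
      refine partitionFunctionNumParts_eq_zero_of_lt ?_
      rcases Nat.lt_or_ge k 3 with hk3 | hk3
      · obtain rfl : k = 2 := by omega
        omega
      · have := Nat.mul_le_mul_right (k - 1) (show 3 ≤ a by omega)
        omega
    refine sum_le_sum_of_le_off_pair (i := 2) (j := a) (by omega) (mem_range.2 (by omega))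
      (mem_range.2 (by omega))
      (fun r _ hr _ ↦ partitionFunctionNumParts_add_sub_mul_le hk (by omega) hkn hn hr) ?_
    rw [hfa, partitionFunctionNumParts_two_left, partitionFunctionNumParts_two_left]
    have := partitionFunctionNumParts_self_pos a
    omega
  · refine sum_le_sum fun r _ ↦ ?_
    rcases eq_or_ne r 2 with rfl | hr
    · rw [partitionFunctionNumParts_two_left, partitionFunctionNumParts_two_left]
      omega
    · exact partitionFunctionNumParts_add_sub_mul_le hk (by omega) hkn hn hr

theorem partitionFunctionGE_add_le_mul {k a n : ℕ} (hk : 2 ≤ k) (ha : 2 ≤ a) (hkn : k ≤ n)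
    (hexc : ¬(k = 2 ∧ a = 3 ∧ (n = 3 ∨ n = 5))) :
    partitionFunctionGE k (a + n) ≤ partitionFunction a * partitionFunctionGE k n := by
  -- a base case, as the recursion would lead from `(2, 3, 7)` to the exception `(2, 3, 5)`
  by_cases h237 : k = 2 ∧ a = 3 ∧ n = 7
  · obtain ⟨rfl, rfl, rfl⟩ := h237
    rw [partitionFunction_eq_eval, partitionFunctionGE_eq_eval (by omega),
      partitionFunctionGE_eq_eval (by omega)]
    decide
  rcases Nat.lt_or_ge n (2 * k) with hn | hn
  · rw [partitionFunctionGE_eq_one hkn hn, mul_one]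
    exact partitionFunctionGE_add_le_of_lt_two_mul hk ha hkn hn (by omega)
  have ih₁ := partitionFunctionGE_add_le_mul hk ha (n := n - k) (by omega) (by omega)
  have ih₂ := partitionFunctionGE_add_le_mul (k := k + 1) (by omega) ha (n := n) (by omega)
    (by omega)
  calc partitionFunctionGE k (a + n)
      = partitionFunctionGE k (a + (n - k)) + partitionFunctionGE (k + 1) (a + n) := by
        rw [partitionFunctionGE_rec (by omega) (by omega), Nat.add_sub_assoc (by omega)]
    _ ≤ partitionFunction a * partitionFunctionGE k (n - k) +
        partitionFunction a * partitionFunctionGE (k + 1) n := add_le_add ih₁ ih₂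
    _ = partitionFunction a * partitionFunctionGE k n := by
        rw [partitionFunctionGE_rec (by omega) hkn, mul_add]
termination_by 2 * n - k

theorem partitionFunction_add_lt_mul {a b : ℕ} (ha : 2 ≤ a) (hab : a ≤ b) (h : 12 ≤ 2 * a + b) :
    partitionFunction (a + b) < partitionFunction a * partitionFunction b := by
  rcases h.eq_or_lt with h12 | h12
  · obtain ⟨rfl, rfl⟩ | ⟨rfl, rfl⟩ | ⟨rfl, rfl⟩ :
        (a = 2 ∧ b = 8) ∨ (a = 3 ∧ b = 6) ∨ (a = 4 ∧ b = 4) := by omega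
    all_goals simp only [partitionFunction_eq_eval]; decide
  have ih : partitionFunction (a + (b - 1)) < partitionFunction a * partitionFunction (b - 1) := by
    rcases hab.lt_or_eq with hab | rfl
    · exact partitionFunction_add_lt_mul ha (by omega) (by omega)
    · rw [add_comm, mul_comm]
      exact partitionFunction_add_lt_mul (by omega) (by omega) (by omega)
  have hstep : partitionFunctionGE 2 (a + b) ≤ partitionFunction a * partitionFunctionGE 2 b :=
    partitionFunctionGE_add_le_mul le_rfl ha (by omega) (by omega)
  calc partitionFunction (a + b)
      = partitionFunction (a + (b - 1)) + partitionFunctionGE 2 (a + b) := by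
        rw [partitionFunction_eq_add_partitionFunctionGE_two (by omega),
          Nat.add_sub_assoc (by omega)]
    _ < partitionFunction a * partitionFunction (b - 1) +
        partitionFunction a * partitionFunctionGE 2 b := add_lt_add_of_lt_of_le ih hstep
    _ = partitionFunction a * partitionFunction b := by
        rw [partitionFunction_eq_add_partitionFunctionGE_two (n := b) (by omega), mul_add]
termination_by a + b

/-- The Bessenrodt–Ono theorem: for `1 < a ≤ b`, `p(a) p(b) = p(a+b)` exactly for
`(a,b) ∈ {(2,6), (2,7), (3,4)}`, `p(a) p(b) < p(a+b)` exactly for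
`(a,b) ∈ {(2,2), (2,3), (2,4), (2,5), (3,3), (3,5)}`, and `p(a) p(b) > p(a+b)` otherwise. -/
theorem bessenrodt_ono (a b : ℕ) (ha : 1 < a) (hab : a ≤ b) :
    (partitionFunction a * partitionFunction b = partitionFunction (a + b) ↔
      (a, b) ∈ ({(2, 6), (2, 7), (3, 4)} : Set (ℕ × ℕ))) ∧
    (partitionFunction a * partitionFunction b < partitionFunction (a + b) ↔
      (a, b) ∈ ({(2, 2), (2, 3), (2, 4), (2, 5), (3, 3), (3, 5)} : Set (ℕ × ℕ))) ∧
    ((a, b) ∉ ({(2, 6), (2, 7), (3, 4), (2, 2), (2, 3), (2, 4), (2, 5), (3, 3),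
        (3, 5)} : Set (ℕ × ℕ)) →
      partitionFunction a * partitionFunction b > partitionFunction (a + b)) := by
  simp only [Set.mem_insert_iff, Set.mem_singleton_iff, Prod.mk.injEq]
  by_cases hsmall : 2 * a + b < 12
  · obtain ⟨rfl, hb⟩ | ⟨rfl, hb⟩ : a = 2 ∧ b ≤ 7 ∨ a = 3 ∧ b ≤ 5 := by omega
    all_goals interval_cases b <;> simp only [partitionFunction_eq_eval] <;> decide
  · have := partitionFunction_add_lt_mul (by omega) hab (by omega)
    exact ⟨iff_of_false (by omega) (by omega), iff_of_false (by omega) (by omega), fun _ ↦ this⟩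
end

section
/- For k = 2, the inequality p_2(2)·p_2(b) < p_2(2+b) holds for every integer b ≥ 2. -/
/-- Add two parts equal to 1 to a partition of `b`. -/
def addTwo {b : ℕ} (p : Nat.Partition b) : Nat.Partition (b + 2) where
  parts := 1 ::ₘ 1 ::ₘ p.parts
  parts_pos := by
    intro i hi
    simp only [Multiset.mem_cons] at hi
    rcases hi with rfl | rfl | h
    · norm_num
    · norm_num
    · exact p.parts_pos h
  parts_sum := by simp [p.parts_sum]; omega

lemma addTwo_inj {b : ℕ} : Function.Injective (@addTwo b) := by
  intro p q h
  have h' := congrArg Nat.Partition.parts h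
  simp only [addTwo, Multiset.cons_inj_right] at h'
  exact Nat.Partition.ext h'

lemma mono_step (b : ℕ) (hb : 2 ≤ b) :
    regularPartitions 2 b < regularPartitions 2 (b + 2) := by
  classical
  unfold regularPartitions
  set s := Finset.univ.filter fun p : b.Partition => ∀ i ∈ p.parts, ¬ 2 ∣ i with hs
  set t := Finset.univ.filter fun p : (b+2).Partition => ∀ i ∈ p.parts, ¬ 2 ∣ i with ht
  obtain ⟨q, hqt, hq1⟩ : ∃ q ∈ t, Multiset.count 1 q.parts < 2 := by
    rcases Nat.even_or_odd b with he | ho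
    · refine ⟨⟨(b+1) ::ₘ {1}, ?_, by rw [Multiset.sum_cons, Multiset.sum_singleton]⟩, ?_, ?_⟩
      · intro i hi
        simp only [Multiset.mem_cons, Multiset.mem_singleton] at hi
        rcases hi with rfl | rfl <;> omega
      · simp only [ht, Finset.mem_filter, Finset.mem_univ, true_and]
        intro i hi
        simp only [Multiset.mem_cons, Multiset.mem_singleton] at hi
        rcases hi with rfl | rfl
        · rcases he with ⟨m, hm⟩; omega
        · omega
      · have h1 : b + 1 ≠ 1 := by omega
        have h0 : b ≠ 0 := by omega
        simp [Multiset.count_cons, Multiset.count_singleton, h1, h0]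
    · refine ⟨⟨{b+2}, ?_, by simp⟩, ?_, ?_⟩
      · intro i hi
        simp only [Multiset.mem_singleton] at hi
        omega
      · simp only [ht, Finset.mem_filter, Finset.mem_univ, true_and]
        intro i hi
        simp only [Multiset.mem_singleton] at hi
        subst hi
        rcases ho with ⟨m, hm⟩; omega
      · have : b + 2 ≠ 1 := by omega
        simp [Multiset.count_singleton, this]
  have hmaps : ∀ p ∈ s, addTwo p ∈ t.erase q := by
    intro p hp
    refine Finset.mem_erase.2 ⟨?_, ?_⟩
    · intro hpq
      have : 2 ≤ Multiset.count 1 (addTwo p).parts := by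
        simp [addTwo, Multiset.count_cons]
      rw [hpq] at this
      omega
    · simp only [ht, Finset.mem_filter, Finset.mem_univ, true_and]
      simp only [hs, Finset.mem_filter, Finset.mem_univ, true_and] at hp
      intro i hi
      simp only [addTwo, Multiset.mem_cons] at hi
      rcases hi with rfl | rfl | h
      · omega
      · omega
      · exact hp i h
  calc s.card ≤ (t.erase q).card :=
        Finset.card_le_card_of_injOn addTwo hmaps (addTwo_inj.injOn)
    _ < t.card := Finset.card_erase_lt_of_mem hqt

/-- For every `b ≥ 2`, `p_2(2) p_2(b) < p_2(2 + b)`. -/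
theorem two_regular_reverse (b : ℕ) (hb : 2 ≤ b) :
    regularPartitions 2 2 * regularPartitions 2 b < regularPartitions 2 (2 + b) := by
  have h2 : regularPartitions 2 2 = 1 := by
    unfold regularPartitions
    rw [Finset.card_eq_one]
    refine ⟨⟨Multiset.replicate 2 1, ?_, by simp⟩, ?_⟩
    · intro i hi
      simp [Multiset.eq_of_mem_replicate hi]
    · ext p
      simp only [Finset.mem_filter, Finset.mem_univ, true_and, Finset.mem_singleton]
      constructor
      · intro hp
        apply Nat.Partition.ext
        have hall : ∀ i ∈ p.parts, i = 1 := by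
          intro i hi
          have hpos := p.parts_pos hi
          have hnd := hp i hi
          have hle : i ≤ 2 := by
            have := Multiset.single_le_sum (fun j _ => Nat.zero_le j) i hi
            rw [p.parts_sum] at this
            exact this
          omega
        have hrep : p.parts = Multiset.replicate (Multiset.card p.parts) 1 :=
          Multiset.eq_replicate_card.mpr hall
        have hcard : Multiset.card p.parts = 2 := by
          have := p.parts_sum
          rw [hrep] at this
          simpa using this
        rw [hrep, hcard]
      · intro hp
        rw [hp]
        intro i hi
        have := Multiset.eq_of_mem_replicate hi
        omega
  rw [h2, one_mul, Nat.add_comm]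
  exact mono_step b hb
end
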